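/- arXiv:math/0601178 — 3 statements merged into one kernel-verified Lean document; each statement's English description precedes it below -/
import Mathlib

section
/- Let m : S^{n−1} → ℝ be a continuous even function with m ≥ 0, let ξ ∈ ℝⁿ, ξ ≠ 0, and let f be a symmetric n×n real matrix. Then the quantity ∫_{S^{n−1} ∩ ξ^⊥} m(θ) (θᵀ f θ)² dσ(θ) is nonnegative, and it is strictly positive whenever f ξ = 0, f ≠ 0, and m > 0 on a nonempty open subset of S^{n−1} ∩ ξ^⊥, provided n ≥ 3. -/
/-! The integrand `m (φ θ) * q (φ θ) ^ 2`, with `q y = ⟪f y, y⟫`, is continuous and nonnegative,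
and `toSphere` charges nonempty open sets, so the integral is nonnegative and is positive as soon
as `q ∘ φ` does not vanish identically on `V`. If it did, the quadratic form `q ∘ φ` would vanish
on the open cone `(0, ∞) • V`, hence everywhere, i.e. `q` would vanish on `ξ^⊥`. Since `f ξ = 0`
and `f` is symmetric, `q y` only depends on the component of `y` in `ξ^⊥`, so `q = 0` and
then `f = 0`. -/

open MeasureTheory RealInnerProductSpace Metric

namespace QuadraticMap
variable {E F : Type*} [NormedAddCommGroup E] [NormedSpace ℝ E] [AddCommGroup F] [Module ℝ F]

theorem map_add_add_map_sub (Q : QuadraticMap ℝ E F) (x y : E) :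
    Q (x + y) + Q (x - y) = 2 • Q x + 2 • Q y := by
  rw [sub_eq_add_neg, QuadraticMap.map_add Q, QuadraticMap.map_add Q, polar_neg_right, Q.map_neg]
  abel

theorem eq_zero_of_isOpen (Q : QuadraticMap ℝ E F) {U : Set E} (hU : IsOpen U)
    (hne : U.Nonempty) (hQ : ∀ x ∈ U, Q x = 0) : Q = 0 := by
  ext v
  obtain ⟨x, hx⟩ := hne
  have hmem : ∀ᶠ t : ℝ in nhds 0, x + t • v ∈ U ∧ x - t • v ∈ U := by
    have hadd := (by fun_prop : Continuous fun t : ℝ => x + t • v).tendsto' 0 x (by simp)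
    have hsub := (by fun_prop : Continuous fun t : ℝ => x - t • v).tendsto' 0 x (by simp)
    exact (hadd.eventually (hU.mem_nhds hx)).and (hsub.eventually (hU.mem_nhds hx))
  obtain ⟨t, ⟨hadd, hsub⟩, ht⟩ :=
    ((hmem.filter_mono nhdsWithin_le_nhds).and (self_mem_nhdsWithin (s := {0}ᶜ))).exists
  have := Q.map_add_add_map_sub x (t • v)
  -- `Q (x ± t • v) = Q x = 0` leaves `2 t² • Q v = 0`
  rw [hQ _ hadd, hQ _ hsub, hQ _ hx, QuadraticMap.map_smul] at this
  rw [zero_add, smul_zero, zero_add, two_nsmul, ← two_smul ℝ, smul_smul] at this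
  exact (smul_eq_zero.1 this.symm).resolve_left (by simpa using ht)

theorem eq_zero_of_isOpen_sphere (Q : QuadraticMap ℝ E F) {V : Set (sphere (0 : E) 1)}
    (hV : IsOpen V) (hne : V.Nonempty) (hQ : ∀ θ ∈ V, Q θ = 0) : Q = 0 := by
  refine Q.eq_zero_of_isOpen (isOpen_Ioi.smul_sphere one_ne_zero (lt_irrefl 0) hV) ?_ ?_
  · obtain ⟨θ, hθ⟩ := hne
    exact ⟨_, Set.smul_mem_smul (Set.mem_Ioi.2 one_pos) (Set.mem_image_of_mem _ hθ)⟩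
  · rintro _ ⟨r, -, _, ⟨θ, hθ, rfl⟩, rfl⟩
    rw [QuadraticMap.map_smul, hQ θ hθ, smul_zero]

end QuadraticMap

theorem LinearMap.IsSymmetric.eq_zero_of_inner_map_self_eq_zero_on_orthogonal
    {E : Type*} [NormedAddCommGroup E] [InnerProductSpace ℝ E]
    {T : E →ₗ[ℝ] E} (hT : T.IsSymmetric) {ξ : E} (hTξ : T ξ = 0)
    (h : ∀ x, ⟪x, ξ⟫ = 0 → ⟪T x, x⟫ = 0) : T = 0 := by
  refine hT.inner_map_self_eq_zero.1 fun x => ?_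
  set p := x - (⟪x, ξ⟫ / ⟪ξ, ξ⟫) • ξ
  have hp : ⟪p, ξ⟫ = 0 := by
    by_cases hξ : ξ = 0
    · simp [hξ]
    · simp [p, inner_sub_left, real_inner_smul_left, hξ]
  have hTp : T x = T p := by simp [p, hTξ]
  calc ⟪T x, x⟫ = ⟪T p, x⟫ := by rw [hTp]
    _ = ⟪T p, p⟫ := by rw [hT, hTp, real_inner_comm]
    _ = 0 := h p hp

theorem Matrix.inner_toEuclideanLin_self {n : Type*} [Fintype n] [DecidableEq n]
    (f : Matrix n n ℝ) (x : EuclideanSpace ℝ n) :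
    ⟪Matrix.toEuclideanLin f x, x⟫ = ∑ i, ∑ j, f i j * x i * x j := by
  simp only [Matrix.toLpLin_apply, PiLp.inner_apply, Matrix.mulVec, dotProduct, RCLike.inner_apply,
    map_sum, Real.ringHom_apply, Finset.mul_sum]
  refine Finset.sum_congr rfl fun i _ => Finset.sum_congr rfl fun j _ => ?_
  ring

theorem LinearMap.IsSymmetric.eq_zero_of_inner_map_self_eq_zero_on_sphere
    {E F : Type*} [NormedAddCommGroup E] [NormedSpace ℝ E]
    [NormedAddCommGroup F] [InnerProductSpace ℝ F]
    {T : F →ₗ[ℝ] F} (hT : T.IsSymmetric) {ξ : F} (hTξ : T ξ = 0)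
    (φ : E →ₗ[ℝ] F) (hφ : {y | ⟪y, ξ⟫ = 0} ⊆ Set.range φ)
    {V : Set (sphere (0 : E) 1)} (hV : IsOpen V) (hne : V.Nonempty)
    (h : ∀ θ ∈ V, ⟪T (φ θ), φ θ⟫ = 0) : T = 0 := by
  let Q := (LinearMap.BilinMap.toQuadraticMap ((innerₗ F).compl₁₂ T LinearMap.id)).comp φ
  have hQ : Q = 0 := Q.eq_zero_of_isOpen_sphere hV hne h
  refine hT.eq_zero_of_inner_map_self_eq_zero_on_orthogonal hTξ fun x hx => ?_
  obtain ⟨u, rfl⟩ := hφ hx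
  exact congrArg (· u) hQ

theorem stmt17_general (n : ℕ)
    (m : EuclideanSpace ℝ (Fin n) → ℝ) (hm : Continuous m)
    (hpos : ∀ θ, 0 ≤ m θ)
    (ξ : EuclideanSpace ℝ (Fin n))
    (f : Matrix (Fin n) (Fin n) ℝ) (hf : f.IsSymm)
    -- `φ` is an isometric parametrization of the hyperplane `ξ^⊥`,
    -- so that `θ ↦ φ θ` identifies the unit sphere of `ξ^⊥` with `S^{n-2}`,
    -- carrying its surface measure `volume.toSphere`.
    (φ : EuclideanSpace ℝ (Fin (n - 1)) →ₗᵢ[ℝ] EuclideanSpace ℝ (Fin n))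
    (hφ : Set.range φ = {y : EuclideanSpace ℝ (Fin n) | ⟪y, ξ⟫ = 0}) :
    0 ≤ ∫ θ : Metric.sphere (0 : EuclideanSpace ℝ (Fin (n - 1))) 1,
          m (φ θ) * (∑ i, ∑ j, f i j * (φ (θ : EuclideanSpace ℝ (Fin (n - 1)))) i
              * (φ (θ : EuclideanSpace ℝ (Fin (n - 1)))) j) ^ 2
          ∂((volume : Measure (EuclideanSpace ℝ (Fin (n - 1)))).toSphere) ∧
    ((∀ i, ∑ j, f i j * ξ j = 0) → f ≠ 0 →
      (∃ V : Set (Metric.sphere (0 : EuclideanSpace ℝ (Fin (n - 1))) 1),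
        IsOpen V ∧ V.Nonempty ∧ ∀ θ ∈ V, 0 < m (φ θ)) →
      0 < ∫ θ : Metric.sphere (0 : EuclideanSpace ℝ (Fin (n - 1))) 1,
          m (φ θ) * (∑ i, ∑ j, f i j * (φ (θ : EuclideanSpace ℝ (Fin (n - 1)))) i
              * (φ (θ : EuclideanSpace ℝ (Fin (n - 1)))) j) ^ 2
          ∂((volume : Measure (EuclideanSpace ℝ (Fin (n - 1)))).toSphere)) := by
  set T := Matrix.toEuclideanLin f
  simp_rw [← Matrix.inner_toEuclideanLin_self]
  have hnonneg : ∀ θ : sphere (0 : EuclideanSpace ℝ (Fin (n - 1))) 1,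
      0 ≤ m (φ θ) * ⟪T (φ θ), φ θ⟫ ^ 2 := fun θ => mul_nonneg (hpos _) (sq_nonneg _)
  refine ⟨integral_nonneg hnonneg, ?_⟩
  rintro hfξ hf0 ⟨V, hVo, hVne, hVm⟩
  obtain ⟨θ, hθV, hθ⟩ : ∃ θ ∈ V, ⟪T (φ θ), φ θ⟫ ≠ 0 := by
    by_contra! h
    have hTξ : T ξ = 0 := by
      ext i
      simpa [T, Matrix.toLpLin_apply, Matrix.mulVec, dotProduct] using hfξ i
    exact hf0 <| Matrix.toEuclideanLin.map_eq_zero_iff.1 <|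
      (Matrix.isSymmetric_toEuclideanLin_iff.2 hf).eq_zero_of_inner_map_self_eq_zero_on_sphere hTξ
        φ.toLinearMap hφ.ge hVo hVne h
  exact Continuous.integral_pos_of_hasCompactSupport_nonneg_nonzero (x := θ) (by fun_prop)
    (.of_compactSpace _) hnonneg (mul_pos (hVm θ hθV) (sq_pos_of_ne_zero hθ)).ne'

theorem stmt17 (n : ℕ) (hn : 3 ≤ n)
    (m : EuclideanSpace ℝ (Fin n) → ℝ) (hm : Continuous m)
    (heven : ∀ θ, m (-θ) = m θ) (hpos : ∀ θ, 0 ≤ m θ)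
    (ξ : EuclideanSpace ℝ (Fin n)) (hξ : ξ ≠ 0)
    (f : Matrix (Fin n) (Fin n) ℝ) (hf : f.IsSymm)
    -- `φ` is an isometric parametrization of the hyperplane `ξ^⊥`,
    -- so that `θ ↦ φ θ` identifies the unit sphere of `ξ^⊥` with `S^{n-2}`,
    -- carrying its surface measure `volume.toSphere`.
    (φ : EuclideanSpace ℝ (Fin (n - 1)) →ₗᵢ[ℝ] EuclideanSpace ℝ (Fin n))
    (hφ : Set.range φ = {y : EuclideanSpace ℝ (Fin n) | ⟪y, ξ⟫ = 0}) :
    0 ≤ ∫ θ : Metric.sphere (0 : EuclideanSpace ℝ (Fin (n - 1))) 1,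
          m (φ θ) * (∑ i, ∑ j, f i j * (φ (θ : EuclideanSpace ℝ (Fin (n - 1)))) i
              * (φ (θ : EuclideanSpace ℝ (Fin (n - 1)))) j) ^ 2
          ∂((volume : Measure (EuclideanSpace ℝ (Fin (n - 1)))).toSphere) ∧
    ((∀ i, ∑ j, f i j * ξ j = 0) → f ≠ 0 →
      (∃ V : Set (Metric.sphere (0 : EuclideanSpace ℝ (Fin (n - 1))) 1),
        IsOpen V ∧ V.Nonempty ∧ ∀ θ ∈ V, 0 < m (φ θ)) →
      0 < ∫ θ : Metric.sphere (0 : EuclideanSpace ℝ (Fin (n - 1))) 1,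
          m (φ θ) * (∑ i, ∑ j, f i j * (φ (θ : EuclideanSpace ℝ (Fin (n - 1)))) i
              * (φ (θ : EuclideanSpace ℝ (Fin (n - 1)))) j) ^ 2
          ∂((volume : Measure (EuclideanSpace ℝ (Fin (n - 1)))).toSphere)) :=
  stmt17_general n m hm hpos ξ f hf φ hφ
end

section
/- Let g be a continuous Riemannian metric on a compact manifold M with boundary and consider the solution v of the first-order linear ODE system along the x^n-coordinate: ∂ₙvₙ = f_{nn}, v|_{xⁿ=0} = 0, followed by ∂ₙvᵢ − 2Γ^α_{ni} v_α = 2f_{in} − ∂ᵢvₙ, vᵢ|_{xⁿ=0} = 0 (i = 1,…,n−1), in boundary normal coordinates where Γ^k_{nn} = Γ^n_{kn} = 0. If f and the Christoffel symbols Γ are continuous on [0, ε] in xⁿ (with parameters x'), then this system has a unique solution v on 0 ≤ xⁿ ≤ ε, and the tensor f − dv satisfies (f − dv)_{in} = 0 for all i. -/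
/-!
In the coordinate `t = xⁿ` the system is a linear ODE `v' = A(t) v + b(t)` for the covector `v`,
with `(A(t) v)ᵢ = 2 Σ_α Γ^α_{ni} v_α`; its `n`-th row vanishes because `Γ^α_{nn} = 0`, which is
why the `n`-th equation is just `∂ₙvₙ = f_{nn}`. Continuous coefficients make the right-hand side
Lipschitz in `v` uniformly on compact time intervals. The Picard–Lindelöf step length then depends
only on the Lipschitz constant, not on the initial value, so finitely many local solutions glue to
one on all of `[0, ε]`, and Grönwall gives uniqueness. The gauge condition is the ODE itself, read
off through `deriv`.
-/

open Set Metric Topology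
open scoped NNReal

section IntegralCurve

variable {E : Type*} [NormedAddCommGroup E] [NormedSpace ℝ E]
  {v : ℝ → E → E} {K : ℝ≥0} {a b c t₀ : ℝ}

/-- The solution stays in the ball of radius `2 B (b - a)` around `x₀`, where `B` bounds
`‖v t x₀‖`. -/
theorem exists_isIntegralCurveOn_Icc_of_mul_le [CompleteSpace E]
    (hv : ∀ t ∈ Icc a b, LipschitzWith K (v t)) (hcont : ∀ x, ContinuousOn (v · x) (Icc a b))
    (hK : K * (b - a) ≤ 1 / 2) (ht₀ : t₀ ∈ Icc a b) (x₀ : E) :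
    ∃ γ, γ t₀ = x₀ ∧ IsIntegralCurveOn γ v (Icc a b) := by
  obtain ⟨B, hB⟩ := isCompact_Icc.exists_bound_of_continuousOn (hcont x₀)
  have hB₀ : 0 ≤ B := (norm_nonneg _).trans (hB t₀ ht₀)
  have hT : max (b - t₀) (t₀ - a) ≤ b - a := max_le (by linarith [ht₀.1]) (by linarith [ht₀.2])
  have hT₀ : 0 ≤ b - a := by linarith [ht₀.1, ht₀.2]
  set r : ℝ≥0 := ⟨2 * B * (b - a), by positivity⟩
  set L : ℝ≥0 := ⟨B + K * r, by positivity⟩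
  have hpl : IsPicardLindelof v ⟨t₀, ht₀⟩ x₀ r 0 L K := by
    refine ⟨fun t ht => (hv t ht).lipschitzOnWith, fun x _ => hcont x, fun t ht x hx => ?_, ?_⟩
    · calc ‖v t x‖ ≤ ‖v t x₀‖ + ‖v t x - v t x₀‖ := norm_le_norm_add_norm_sub' _ _
        _ ≤ B + K * r := by
          gcongr
          · exact hB t ht
          · rw [← dist_eq_norm]
            exact (hv t ht).dist_le_mul_of_le (mem_closedBall.mp hx)
    · change (B + K * (2 * B * (b - a))) * max (b - t₀) (t₀ - a) ≤ 2 * B * (b - a) - 0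
      have hKB : K * (2 * B * (b - a)) ≤ B := by nlinarith
      calc (B + K * (2 * B * (b - a))) * max (b - t₀) (t₀ - a) ≤ (B + B) * (b - a) :=
            mul_le_mul (by linarith) hT ((sub_nonneg.2 ht₀.2).trans (le_max_left _ _))
              (by linarith)
        _ = 2 * B * (b - a) - 0 := by ring
  exact hpl.exists_eq_forall_mem_Icc_hasDerivWithinAt₀

theorem IsIntegralCurveOn.hasDerivWithinAt_of_eqOn {γ g : ℝ → E} {s : Set ℝ}
    (h : IsIntegralCurveOn γ v s) (hs : IsClosed s) (hg : EqOn g γ s) (t : ℝ) :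
    HasDerivWithinAt g (v t (g t)) s t := by
  by_cases ht : t ∈ s
  · rw [hg ht]
    exact (h t ht).congr hg (hg ht)
  · exact HasFDerivWithinAt.of_notMem_closure (by rwa [hs.closure_eq])

theorem IsIntegralCurveOn.exists_eqOn_Icc_union_Icc {γ γ' : ℝ → E}
    (h : IsIntegralCurveOn γ v (Icc a c)) (h' : IsIntegralCurveOn γ' v (Icc c b))
    (hc : γ c = γ' c) :
    ∃ g, EqOn g γ (Icc a c) ∧ EqOn g γ' (Icc c b) ∧ IsIntegralCurveOn g v (Icc a c ∪ Icc c b) := by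
  have hl : EqOn (fun t => if t ≤ c then γ t else γ' t) γ (Icc a c) := fun t ht => if_pos ht.2
  have hr : EqOn (fun t => if t ≤ c then γ t else γ' t) γ' (Icc c b) := fun t ht => by
    rcases ht.1.eq_or_lt with rfl | hct
    · simp [hc]
    · exact if_neg hct.not_ge
  exact ⟨_, hl, hr, fun t _ => (h.hasDerivWithinAt_of_eqOn isClosed_Icc hl t).union
    (h'.hasDerivWithinAt_of_eqOn isClosed_Icc hr t)⟩

theorem exists_isIntegralCurveOn_Icc [CompleteSpace E]
    (hv : ∀ t ∈ Icc a b, LipschitzWith K (v t)) (hcont : ∀ x, ContinuousOn (v · x) (Icc a b))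
    (ht₀ : t₀ ∈ Icc a b) (x₀ : E) :
    ∃ γ, γ t₀ = x₀ ∧ IsIntegralCurveOn γ v (Icc a b) := by
  set d : ℝ := 1 / (2 * (K + 1))
  have hd : 0 < d := by positivity
  have hKd : K * d ≤ 1 / 2 := by
    rw [mul_one_div, div_le_div_iff₀ (by positivity) two_pos]
    linarith
  suffices key : ∀ N : ℕ, ∀ a' b', Icc a' b' ⊆ Icc a b → b' - a' ≤ N * d →
      ∀ t₀ ∈ Icc a' b', ∀ x₀ : E, ∃ γ, γ t₀ = x₀ ∧ IsIntegralCurveOn γ v (Icc a' b') by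
    obtain ⟨N, hN⟩ := exists_nat_ge ((b - a) / d)
    exact key N a b subset_rfl ((div_le_iff₀ hd).mp hN) t₀ ht₀ x₀
  intro N
  induction N with
  | zero =>
    intro a' b' hsub hlen t₀ ht₀ x₀
    refine exists_isIntegralCurveOn_Icc_of_mul_le (fun t ht => hv t (hsub ht))
      (fun x => (hcont x).mono hsub) ?_ ht₀ x₀
    exact (mul_nonpos_of_nonneg_of_nonpos K.2 (by simpa using hlen)).trans (by norm_num)
  | succ N ih =>
    intro a' b' hsub hlen t₀ ht₀ x₀
    -- split off a last step `[c, b']`; solve first on the piece containing `t₀`, then on the other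
    set c := max a' (b' - d)
    have hac : a' ≤ c := le_max_left _ _
    have hcb : c ≤ b' := max_le (ht₀.1.trans ht₀.2) (by linarith)
    have hlen' : c - a' ≤ N * d := by
      push_cast at hlen
      exact sub_le_iff_le_add.2 (max_le (le_add_of_nonneg_left (by positivity))
        (by linarith))
    have hstep : ∀ t₁ ∈ Icc c b', ∀ x₁ : E, ∃ γ, γ t₁ = x₁ ∧ IsIntegralCurveOn γ v (Icc c b') :=
      fun t₁ ht₁ x₁ => exists_isIntegralCurveOn_Icc_of_mul_le
        (fun t ht => hv t (hsub (Icc_subset_Icc_left hac ht)))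
        (fun x => (hcont x).mono ((Icc_subset_Icc_left hac).trans hsub))
        (le_trans (by gcongr; linarith [le_max_right a' (b' - d)]) hKd) ht₁ x₁
    have ih' := ih a' c ((Icc_subset_Icc_right hcb).trans hsub) hlen'
    rw [← Icc_union_Icc_eq_Icc hac hcb]
    rcases le_total t₀ c with htc | hct
    · obtain ⟨γ, hγ₀, hγ⟩ := ih' t₀ ⟨ht₀.1, htc⟩ x₀
      obtain ⟨γ', hγ'c, hγ'⟩ := hstep c ⟨le_rfl, hcb⟩ (γ c)
      obtain ⟨g, hg, -, hg'⟩ := hγ.exists_eqOn_Icc_union_Icc hγ' hγ'c.symm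
      exact ⟨g, (hg ⟨ht₀.1, htc⟩).trans hγ₀, hg'⟩
    · obtain ⟨γ', hγ'₀, hγ'⟩ := hstep t₀ ⟨hct, ht₀.2⟩ x₀
      obtain ⟨γ, hγc, hγ⟩ := ih' c ⟨hac, le_rfl⟩ (γ' c)
      obtain ⟨g, -, hg, hg'⟩ := hγ.exists_eqOn_Icc_union_Icc hγ' hγc
      exact ⟨g, (hg ⟨hct, ht₀.2⟩).trans hγ'₀, hg'⟩

theorem IsIntegralCurveOn.eqOn_Icc_of_lipschitzWith {γ γ' : ℝ → E}
    (hv : ∀ t ∈ Icc a b, LipschitzWith K (v t)) (hγ : IsIntegralCurveOn γ v (Icc a b))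
    (hγ' : IsIntegralCurveOn γ' v (Icc a b)) (ha : γ a = γ' a) :
    EqOn γ γ' (Icc a b) := by
  have hIci : ∀ {γ}, IsIntegralCurveOn γ v (Icc a b) →
      ∀ t ∈ Ico a b, HasDerivWithinAt γ (v t (γ t)) (Ici t) t := fun h t ht =>
    (h t (Ico_subset_Icc_self ht)).mono_of_mem_nhdsWithin (Icc_mem_nhdsGE_of_mem ht)
  exact ODE_solution_unique_of_mem_Icc_right (s := fun _ => univ)
    (fun t ht => (hv t (Ico_subset_Icc_self ht)).lipschitzOnWith) hγ.continuousOn (hIci hγ)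
    (fun _ _ => trivial) hγ'.continuousOn (hIci hγ') (fun _ _ => trivial) ha

theorem exists_lipschitzWith_clm_apply_add {α : Type*} [TopologicalSpace α] {s : Set α}
    (hs : IsCompact s) {A : α → E →L[ℝ] E} (hA : ContinuousOn A s) (f : α → E) :
    ∃ K : ℝ≥0, ∀ t ∈ s, LipschitzWith K fun x => A t x + f t := by
  obtain ⟨C, hC⟩ := hs.exists_bound_of_continuousOn hA
  refine ⟨C.toNNReal, fun t ht => ((A t).lipschitz.add (LipschitzWith.const (f t))).weaken ?_⟩
  rw [add_zero, ← NNReal.coe_le_coe, coe_nnnorm]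
  exact (hC t ht).trans (Real.le_coe_toNNReal C)

theorem eqOn_Icc_of_hasDerivAt_clm_apply_add {A : ℝ → E →L[ℝ] E} {f : ℝ → E}
    (hA : ContinuousOn A (Icc a b)) {γ γ' : ℝ → E}
    (hγ : ∀ t ∈ Icc a b, HasDerivAt γ (A t (γ t) + f t) t)
    (hγ' : ∀ t ∈ Icc a b, HasDerivAt γ' (A t (γ' t) + f t) t) (ha : γ a = γ' a) :
    EqOn γ γ' (Icc a b) := by
  obtain ⟨K, hK⟩ := exists_lipschitzWith_clm_apply_add isCompact_Icc hA f
  exact IsIntegralCurveOn.eqOn_Icc_of_lipschitzWith hK (fun t ht => (hγ t ht).hasDerivWithinAt)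
    (fun t ht => (hγ' t ht).hasDerivWithinAt) ha

theorem exists_forall_mem_Icc_hasDerivAt_clm_apply_add [CompleteSpace E] {A : ℝ → E →L[ℝ] E}
    {f : ℝ → E} (hA : Continuous A) (hf : Continuous f) (a b t₀ : ℝ) (x₀ : E) :
    ∃ γ, γ t₀ = x₀ ∧ ∀ t ∈ Icc a b, HasDerivAt γ (A t (γ t) + f t) t := by
  set I := Icc (min a t₀ - 1) (max b t₀ + 1)
  have hI : ∀ t ∈ Icc a b, I ∈ 𝓝 t := fun t ht =>
    Icc_mem_nhds (by linarith [min_le_left a t₀, ht.1]) (by linarith [le_max_left b t₀, ht.2])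
  obtain ⟨K, hK⟩ := exists_lipschitzWith_clm_apply_add isCompact_Icc hA.continuousOn f
  obtain ⟨γ, hγ₀, hγ⟩ := exists_isIntegralCurveOn_Icc hK
    (fun x => ((hA.clm_apply continuous_const).add hf).continuousOn)
    (⟨by linarith [min_le_right a t₀], by linarith [le_max_right b t₀]⟩ : t₀ ∈ I) x₀
  exact ⟨γ, hγ₀, fun t ht => (hγ t (mem_of_mem_nhds (hI t ht))).hasDerivAt (hI t ht)⟩

end IntegralCurve

section Gauge

open Finset

variable {n : ℕ}

def gaugeOperator (Γ : ℝ → Fin (n + 1) → Fin (n + 1) → ℝ) (t : ℝ) :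
    (Fin (n + 1) → ℝ) →L[ℝ] (Fin (n + 1) → ℝ) :=
  ContinuousLinearMap.pi fun i =>
    ∑ α ∈ univ.erase (Fin.last n), (2 * Γ t α i) • ContinuousLinearMap.proj α

def gaugeSource (f : ℝ → Fin (n + 1) → Fin (n + 1) → ℝ) (h : ℝ → Fin (n + 1) → ℝ) (t : ℝ) :
    Fin (n + 1) → ℝ :=
  fun i => if i = Fin.last n then f t (Fin.last n) (Fin.last n) else 2 * f t i (Fin.last n) - h t i

theorem gaugeOperator_apply (Γ : ℝ → Fin (n + 1) → Fin (n + 1) → ℝ) (t : ℝ)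
    (y : Fin (n + 1) → ℝ) (i : Fin (n + 1)) :
    gaugeOperator Γ t y i = 2 * ∑ α ∈ univ.erase (Fin.last n), Γ t α i * y α := by
  simp only [gaugeOperator, ContinuousLinearMap.pi_apply, _root_.sum_apply,
    _root_.smul_apply, ContinuousLinearMap.proj_apply, smul_eq_mul, mul_sum, mul_assoc]

theorem continuous_gaugeOperator {Γ : ℝ → Fin (n + 1) → Fin (n + 1) → ℝ} (hΓ : Continuous Γ) :
    Continuous (gaugeOperator Γ) :=
  continuous_clm_apply.2 fun y => continuous_pi fun i => by
    simp only [gaugeOperator_apply]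
    fun_prop

theorem continuous_gaugeSource {f : ℝ → Fin (n + 1) → Fin (n + 1) → ℝ} {h : ℝ → Fin (n + 1) → ℝ}
    (hf : Continuous f) (hh : Continuous h) : Continuous (gaugeSource f h) :=
  continuous_pi fun i => by
    unfold gaugeSource
    split_ifs <;> fun_prop

theorem hasDerivAt_gaugeOperator_add_gaugeSource_iff {f Γ : ℝ → Fin (n + 1) → Fin (n + 1) → ℝ}
    {h : ℝ → Fin (n + 1) → ℝ} (hΓnn : ∀ t α, Γ t α (Fin.last n) = 0)
    {v : ℝ → Fin (n + 1) → ℝ} {t : ℝ} :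
    HasDerivAt v (gaugeOperator Γ t (v t) + gaugeSource f h t) t ↔
      HasDerivAt (fun s => v s (Fin.last n)) (f t (Fin.last n) (Fin.last n)) t ∧
      ∀ i, i ≠ Fin.last n → HasDerivAt (fun s => v s i)
        (2 * (∑ α ∈ univ.erase (Fin.last n), Γ t α i * v t α) + 2 * f t i (Fin.last n) - h t i)
        t := by
  rw [hasDerivAt_pi]
  constructor
  · intro H
    exact ⟨by simpa [gaugeOperator_apply, gaugeSource, hΓnn] using H (Fin.last n),
      fun i hi => by simpa [gaugeOperator_apply, gaugeSource, hi, add_sub_assoc] using H i⟩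
  · rintro ⟨Hn, Hi⟩ i
    by_cases hi : i = Fin.last n
    · subst hi
      simpa [gaugeOperator_apply, gaugeSource, hΓnn] using Hn
    · simpa [gaugeOperator_apply, gaugeSource, hi, add_sub_assoc] using Hi i hi

end Gauge

/-- Indices run over `Fin (n+1)`, with `Fin.last n` playing the role of the index `n`;
`Γ t α i = Γ^α_{n i}(t)` and `h t i = ∂ᵢvₙ(t)` at the fixed boundary point `x'`. -/
theorem stmt18_general (n : ℕ) (ε : ℝ)
    (f : ℝ → Fin (n + 1) → Fin (n + 1) → ℝ) (hf : Continuous f)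
    (Γ : ℝ → Fin (n + 1) → Fin (n + 1) → ℝ) (hΓ : Continuous Γ)
    (hΓnn : ∀ t α, Γ t α (Fin.last n) = 0)
    (h : ℝ → Fin (n + 1) → ℝ) (hh : Continuous h) :
    letI lst : Fin (n + 1) := Fin.last n
    letI P : (ℝ → Fin (n + 1) → ℝ) → Prop := fun v =>
      v 0 = 0 ∧
      (∀ t ∈ Set.Icc (0 : ℝ) ε,
        HasDerivAt (fun s => v s lst) (f t lst lst) t) ∧
      (∀ t ∈ Set.Icc (0 : ℝ) ε, ∀ i, i ≠ lst →
        HasDerivAt (fun s => v s i)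
          (2 * (∑ α ∈ Finset.univ.erase lst, Γ t α i * v t α) + 2 * f t i lst - h t i) t)
    (∃ v, P v) ∧
    (∀ v w, P v → P w → ∀ t ∈ Set.Icc (0 : ℝ) ε, v t = w t) ∧
    -- the gauge condition `(f - dv)_{i n} = 0`, where
    -- `(dv)_{i n} = (∂ₙvᵢ + ∂ᵢvₙ)/2 − Σ_α Γ^α_{n i} v_α`:
    (∀ v, P v → ∀ t ∈ Set.Icc (0 : ℝ) ε, ∀ i,
      f t i lst - ((deriv (fun s => v s i) t
          + (if i = lst then deriv (fun s => v s lst) t else h t i)) / 2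
        - ∑ α ∈ Finset.univ.erase lst, Γ t α i * v t α) = 0) := by
  have hF := fun v t =>
    hasDerivAt_gaugeOperator_add_gaugeSource_iff (f := f) (h := h) hΓnn (v := v) (t := t)
  refine ⟨?_, fun v w hv hw t ht => ?_, fun v hv t ht i => ?_⟩
  · obtain ⟨v, hv0, hv⟩ := exists_forall_mem_Icc_hasDerivAt_clm_apply_add
      (continuous_gaugeOperator hΓ) (continuous_gaugeSource hf hh) 0 ε 0 0
    exact ⟨v, hv0, fun t ht => ((hF v t).1 (hv t ht)).1, fun t ht => ((hF v t).1 (hv t ht)).2⟩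
  · obtain ⟨hv0, hvn, hvi⟩ := hv
    obtain ⟨hw0, hwn, hwi⟩ := hw
    exact eqOn_Icc_of_hasDerivAt_clm_apply_add (continuous_gaugeOperator hΓ).continuousOn
      (fun t ht => (hF v t).2 ⟨hvn t ht, hvi t ht⟩) (fun t ht => (hF w t).2 ⟨hwn t ht, hwi t ht⟩)
      (hv0.trans hw0.symm) ht
  · obtain ⟨-, hvn, hvi⟩ := hv
    by_cases hi : i = Fin.last n
    · subst hi
      simp only [if_true, (hvn t ht).deriv, hΓnn, zero_mul, Finset.sum_const_zero]
      ring
    · rw [if_neg hi, (hvi t ht i hi).deriv]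
      ring

/-- The gauge construction of Lemma 3.3(b), at a fixed boundary point `x'`,
as a linear ODE system in the boundary normal coordinate `xⁿ ∈ [0, ε]`.
Indices run over `Fin (n+1)`, with `Fin.last n` playing the role of the index `n`.
`f t i j` are the components of the tensor, `Γ t α i = Γ^α_{n i}(t)` are the
Christoffel symbols (with `Γ^k_{nn} = Γ^n_{kn} = 0` in these coordinates), and
`h t i = ∂ᵢvₙ(t)` is the tangential-derivative source term. -/
theorem stmt18 (n : ℕ) (ε : ℝ) (hε : 0 < ε)
    (f : ℝ → Fin (n + 1) → Fin (n + 1) → ℝ) (hf : Continuous f)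
    (Γ : ℝ → Fin (n + 1) → Fin (n + 1) → ℝ) (hΓ : Continuous Γ)
    (hΓnn : ∀ t α, Γ t α (Fin.last n) = 0)
    (h : ℝ → Fin (n + 1) → ℝ) (hh : Continuous h) :
    letI lst : Fin (n + 1) := Fin.last n
    letI P : (ℝ → Fin (n + 1) → ℝ) → Prop := fun v =>
      v 0 = 0 ∧
      (∀ t ∈ Set.Icc (0 : ℝ) ε,
        HasDerivAt (fun s => v s lst) (f t lst lst) t) ∧
      (∀ t ∈ Set.Icc (0 : ℝ) ε, ∀ i, i ≠ lst →
        HasDerivAt (fun s => v s i)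
          (2 * (∑ α ∈ Finset.univ.erase lst, Γ t α i * v t α) + 2 * f t i lst - h t i) t)
    (∃ v, P v) ∧
    (∀ v w, P v → P w → ∀ t ∈ Set.Icc (0 : ℝ) ε, v t = w t) ∧
    -- the gauge condition `(f - dv)_{i n} = 0`, where
    -- `(dv)_{i n} = (∂ₙvᵢ + ∂ᵢvₙ)/2 − Σ_α Γ^α_{n i} v_α`:
    (∀ v, P v → ∀ t ∈ Set.Icc (0 : ℝ) ε, ∀ i,
      f t i lst - ((deriv (fun s => v s i) t
          + (if i = lst then deriv (fun s => v s lst) t else h t i)) / 2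
        - ∑ α ∈ Finset.univ.erase lst, Γ t α i * v t α) = 0) :=
  stmt18_general n ε f hf Γ hΓ hΓnn h hh
end

section
/- Let U ⊆ ℝⁿ be open and connected, and let v, w : U → ℝⁿ be C¹ vector fields with equal symmetric differentials, dv = dw on U, such that v = w on some nonempty open subset of U. Then v = w on all of U. -/
/-!
Put `u = v - w`. Its differential is skew-symmetric, so by the mean value theorem
`⟪u y - u x, y - x⟫ = 0` whenever the segment `[x, y]` lies in `U`. If `u` vanishes near `q`
and `z` lies in a ball around `q` inside `U`, this gives `⟪u z, z - a⟫ = 0` for all `a` near `q`,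
which forces `u z = 0`. Hence the interior of the zero set of `u` is relatively closed in `U`,
and connectedness of `U` finishes the proof.
-/

open Matrix Set Filter Topology

variable {ι : Type*} [Fintype ι]

theorem dotProduct_apply_self_eq_zero [DecidableEq ι] (L : (ι → ℝ) →L[ℝ] ι → ℝ)
    (hL : ∀ i j, L (Pi.single i 1) j + L (Pi.single j 1) i = 0) (h : ι → ℝ) :
    L h ⬝ᵥ h = 0 := by
  set Q := ∑ i, ∑ j, h i * h j * L (Pi.single i 1) j
  have hQ : L h ⬝ᵥ h = Q := by
    have hLh : L h = ∑ i, h i • L (Pi.single i 1) := by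
      conv_lhs => rw [pi_eq_sum_univ' h]
      simp only [map_sum, map_smul]
    simp only [hLh, dotProduct, Finset.sum_apply, Pi.smul_apply, smul_eq_mul,
      Finset.sum_mul, Q]
    rw [Finset.sum_comm]
    exact Finset.sum_congr rfl fun i _ => Finset.sum_congr rfl fun j _ => by ring
  have hneg : Q = -Q := by
    calc Q = ∑ j, ∑ i, h i * h j * L (Pi.single i 1) j := Finset.sum_comm
      _ = -Q := by
        simp only [Q, ← Finset.sum_neg_distrib]
        refine Finset.sum_congr rfl fun j _ => Finset.sum_congr rfl fun i _ => ?_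
        linear_combination h i * h j * hL i j
  rw [hQ]
  linarith

theorem eq_zero_of_eventually_dotProduct_eq {d q : ι → ℝ}
    (h : ∀ᶠ a in 𝓝 q, d ⬝ᵥ a = d ⬝ᵥ q) : d = 0 := by
  have hline : Tendsto (fun t : ℝ => q + t • d) (𝓝 0) (𝓝 q) := by
    simpa using (tendsto_id.smul_const d).const_add q (x := 𝓝 (0 : ℝ))
  obtain ⟨t, ht, ht0⟩ := ((hline.eventually h).filter_mono nhdsWithin_le_nhds
    |>.and (self_mem_nhdsWithin (s := {0}ᶜ))).exists
  simp only [dotProduct_add, dotProduct_smul, smul_eq_mul, add_eq_left] at ht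
  exact dotProduct_self_eq_zero.mp ((mul_eq_zero.mp ht).resolve_left ht0)

-- `du = 0` for the symmetric differential, written as the vanishing of its quadratic form.
def IsKillingFieldOn (u : (ι → ℝ) → ι → ℝ) (s : Set (ι → ℝ)) : Prop :=
  ∀ x ∈ s, DifferentiableAt ℝ u x ∧ ∀ h, fderiv ℝ u x h ⬝ᵥ h = 0

namespace IsKillingFieldOn

variable {u : (ι → ℝ) → ι → ℝ} {s : Set (ι → ℝ)}

theorem mono {t : Set (ι → ℝ)} (hK : IsKillingFieldOn u s) (hts : t ⊆ s) :
    IsKillingFieldOn u t :=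
  fun x hx => hK x (hts hx)

theorem sub_dotProduct_sub_eq_zero (hK : IsKillingFieldOn u s) (hs : Convex ℝ s) {x y : ι → ℝ}
    (hx : x ∈ s) (hy : y ∈ s) : (u y - u x) ⬝ᵥ (y - x) = 0 := by
  let ℓ : (ι → ℝ) →L[ℝ] ℝ := LinearMap.toContinuousLinearMap ((dotProductBilin ℝ ℝ).flip (y - x))
  obtain ⟨z, hz, hmvt⟩ := domain_mvt (f := fun z => ℓ (u z))
    (fun z hz => (ℓ.hasFDerivAt.comp z (hK z hz).1.hasFDerivAt).hasFDerivWithinAt) hs hx hy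
  have hℓ : ∀ a, ℓ a = a ⬝ᵥ (y - x) := fun _ => rfl
  rw [ContinuousLinearMap.comp_apply, hℓ, hℓ, hℓ, (hK z (hs.segment_subset hx hy hz)).2] at hmvt
  rwa [sub_dotProduct]

theorem eqOn_zero_of_convex (hK : IsKillingFieldOn u s) (hs : Convex ℝ s) (hso : IsOpen s)
    {q : ι → ℝ} (hq : q ∈ s) (hu : u =ᶠ[𝓝 q] 0) : EqOn u 0 s := by
  intro z hz
  refine eq_zero_of_eventually_dotProduct_eq (q := q) ?_
  filter_upwards [hu, hso.mem_nhds hq] with a hua ha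
  have hza := hK.sub_dotProduct_sub_eq_zero hs ha hz
  have huq := hK.sub_dotProduct_sub_eq_zero hs hq hz
  rw [hua, hu.self_of_nhds] at *
  simp only [Pi.zero_apply, sub_zero, dotProduct_sub] at hza huq
  linarith

theorem eqOn_zero (hK : IsKillingFieldOn u s) (hso : IsOpen s) (hs : IsPreconnected s)
    {q : ι → ℝ} (hq : q ∈ s) (hu : u =ᶠ[𝓝 q] 0) : EqOn u 0 s := by
  suffices h : s ⊆ {x | u =ᶠ[𝓝 x] 0} from fun x hx => (h hx).self_of_nhds
  refine hs.subset_of_closure_inter_subset isOpen_setOfPred_eventually_nhds ⟨q, hq, hu⟩ ?_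
  rintro p ⟨hp, hps⟩
  obtain ⟨r, hr, hball⟩ := Metric.isOpen_iff.mp hso p hps
  obtain ⟨q', hq'u, hq'p⟩ := Metric.mem_closure_iff.mp hp r hr
  have := (hK.mono hball).eqOn_zero_of_convex (convex_ball p r) Metric.isOpen_ball
    (Metric.mem_ball'.mpr hq'p) hq'u
  exact Filter.eventuallyEq_of_mem (Metric.ball_mem_nhds p hr) this

end IsKillingFieldOn

theorem isKillingFieldOn_sub [DecidableEq ι] {U : Set (ι → ℝ)} (hU : IsOpen U)
    {v w : (ι → ℝ) → ι → ℝ} (hv : DifferentiableOn ℝ v U) (hw : DifferentiableOn ℝ w U)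
    (hdvw : ∀ x ∈ U, ∀ i j : ι,
      fderiv ℝ (fun y => v y j) x (Pi.single i 1) + fderiv ℝ (fun y => v y i) x (Pi.single j 1)
        = fderiv ℝ (fun y => w y j) x (Pi.single i 1)
          + fderiv ℝ (fun y => w y i) x (Pi.single j 1)) :
    IsKillingFieldOn (v - w) U := by
  intro x hx
  have hvx := hv.differentiableAt (hU.mem_nhds hx)
  have hwx := hw.differentiableAt (hU.mem_nhds hx)
  refine ⟨hvx.sub hwx, dotProduct_apply_self_eq_zero _ fun i j => ?_⟩
  have h := hdvw x hx i j
  simp only [fderiv_apply hvx, fderiv_apply hwx, ContinuousLinearMap.comp_apply,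
    ContinuousLinearMap.proj_apply] at h
  rw [fderiv_sub hvx hwx]
  simp only [_root_.sub_apply, Pi.sub_apply]
  linarith

theorem stmt19 (n : ℕ) (U : Set (Fin n → ℝ)) (hU : IsOpen U) (hconn : IsConnected U)
    (v w : (Fin n → ℝ) → (Fin n → ℝ))
    (hv : ContDiffOn ℝ 1 v U) (hw : ContDiffOn ℝ 1 w U)
    (hdvw : ∀ x ∈ U, ∀ i j : Fin n,
      fderiv ℝ (fun y => v y j) x (Pi.single i 1)
          + fderiv ℝ (fun y => v y i) x (Pi.single j 1)
        = fderiv ℝ (fun y => w y j) x (Pi.single i 1)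
          + fderiv ℝ (fun y => w y i) x (Pi.single j 1))
    (V : Set (Fin n → ℝ)) (hV : IsOpen V) (hVne : V.Nonempty) (hVU : V ⊆ U)
    (heq : Set.EqOn v w V) :
    Set.EqOn v w U := by
  have hK := isKillingFieldOn_sub hU (hv.differentiableOn one_ne_zero)
    (hw.differentiableOn one_ne_zero) hdvw
  obtain ⟨q, hq⟩ := hVne
  have hvw : v - w =ᶠ[𝓝 q] 0 :=
    eventuallyEq_of_mem (hV.mem_nhds hq) fun x hx => sub_eq_zero.mpr (heq hx)
  exact fun x hx => sub_eq_zero.mp (hK.eqOn_zero hU hconn.isPreconnected (hVU hq) hvw hx)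
end
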